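/- arXiv:1308.0429 — 5 statements merged into one kernel-verified Lean document; each statement's English description precedes it below -/
import Mathlib

section
/- Let B be a separable C*-algebra and let A ⊆ B be a separable C*-subalgebra such that the inclusion is nondegenerate, i.e. the set {a·b : a ∈ A, b ∈ B} has dense linear span in B. If the set T₁(A) of tracial states of A is compact in the weak-* topology, then the set T₁(B) of tracial states of B is compact in the weak-* topology. (Lemma 2.2 of the paper.) -/
open Filter Topology CStarAlgebra

open scoped ComplexOrder

/-- The set of tracial states of a (possibly non-unital) C*-algebra `C`, viewed inside the
weak-* dual `WeakDual ℂ C`: continuous linear functionals of norm one which are positive and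
tracial. -/
def tracialStates (C : Type*) [NonUnitalNormedRing C] [StarRing C]
    [NormedSpace ℂ C] [PartialOrder C] : Set (WeakDual ℂ C) :=
  {τ | ‖WeakDual.toStrongDual τ‖ = 1 ∧ (∀ c : C, 0 ≤ c → 0 ≤ τ c) ∧
    ∀ x y : C, τ (x * y) = τ (y * x)}

section Aux

variable {A B : Type*}
    [NonUnitalCStarAlgebra A] [PartialOrder A] [StarOrderedRing A]
    [NonUnitalCStarAlgebra B] [PartialOrder B] [StarOrderedRing B]

private lemma aux_nonneg_re {τ : B →L[ℂ] ℂ} (hpos : ∀ c : B, 0 ≤ c → 0 ≤ τ c) (x : B) :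
    0 ≤ (τ (star x * x)).re ∧ (τ (star x * x)).im = 0 := by
  have h := hpos _ (star_mul_self_nonneg x)
  rw [Complex.le_def] at h
  exact ⟨by simpa using h.1, by simpa using h.2.symm⟩

private lemma aux_cs (τ : B →L[ℂ] ℂ) (hpos : ∀ c : B, 0 ≤ c → 0 ≤ τ c) (x y : B) :
    ‖τ (star x * y)‖ ^ 2 ≤ (τ (star x * x)).re * (τ (star y * y)).re := by
  set t := τ (star x * y) with ht
  set s := τ (star y * x) with hs
  set P := (τ (star x * x)).re with hP'
  set Q := (τ (star y * y)).re with hQ'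
  have hP : 0 ≤ P := (aux_nonneg_re hpos x).1
  have hQ : 0 ≤ Q := (aux_nonneg_re hpos y).1
  have hPim : (τ (star x * x)).im = 0 := (aux_nonneg_re hpos x).2
  have hQim : (τ (star y * y)).im = 0 := (aux_nonneg_re hpos y).2
  have key : ∀ c : ℂ, 0 ≤ (starRingEnd ℂ c) * c * τ (star x * x)
      + (starRingEnd ℂ c) * t + c * s + τ (star y * y) := by
    intro c
    have h0 := hpos _ (star_mul_self_nonneg (c • x + y))
    have hexp : star (c • x + y) * (c • x + y)
        = ((starRingEnd ℂ c) * c) • (star x * x) + (starRingEnd ℂ c) • (star x * y)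
          + c • (star y * x) + star y * y := by
      simp only [star_add, star_smul, add_mul, mul_add, smul_mul_assoc, mul_smul_comm,
        RCLike.star_def]
      module
    rw [hexp] at h0
    simpa [map_add, map_smul, smul_eq_mul, mul_assoc] using h0
  have him : s = starRingEnd ℂ t := by
    have h1 := (Complex.le_def.mp (key 1)).2
    have hi := (Complex.le_def.mp (key Complex.I)).2
    simp only [map_one, one_mul, mul_one, Complex.add_im, Complex.mul_im, hPim, hQim,
      Complex.one_re, Complex.one_im, Complex.conj_I, Complex.I_re, Complex.I_im,
      Complex.neg_im, Complex.neg_re, Complex.zero_im, Complex.zero_re, mul_zero, zero_mul,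
      add_zero, zero_add, neg_zero, neg_mul, one_mul, neg_neg] at h1 hi
    apply Complex.ext
    · simp only [Complex.conj_re]; linarith
    · simp only [Complex.conj_im]; linarith
  by_cases ht0 : t = 0
  · simpa [ht0] using mul_nonneg hP hQ
  · set a : ℝ := ‖t‖ with ha'
    have ha : 0 < a := by simpa [ha'] using (norm_pos_iff.mpr ht0)
    set u : ℂ := t / (a : ℂ) with hu'
    have hut : (starRingEnd ℂ u) * t = (a : ℂ) := by
      rw [hu', map_div₀, Complex.conj_ofReal, div_mul_eq_mul_div, mul_comm,
        Complex.mul_conj, Complex.normSq_eq_norm_sq, ← ha']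
      push_cast
      field_simp
    have hut' : u * (starRingEnd ℂ t) = (a : ℂ) := by
      rw [hu', div_mul_eq_mul_div, Complex.mul_conj, Complex.normSq_eq_norm_sq, ← ha']
      push_cast
      field_simp
    have huu : (starRingEnd ℂ u) * u = 1 := by
      have hane : ((a : ℝ) : ℂ) ≠ 0 := by exact_mod_cast ha.ne'
      nth_rewrite 2 [hu']
      rw [mul_div_assoc', hut]
      exact div_self hane
    have hpoly : ∀ r : ℝ, 0 ≤ P * (r * r) + (-(2 * a)) * r + Q := by
      intro r
      have h := key (-(r : ℂ) * u)
      have hcc : (starRingEnd ℂ (-(r : ℂ) * u)) * (-(r : ℂ) * u) = ((r * r : ℝ) : ℂ) := by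
        rw [map_mul, map_neg, Complex.conj_ofReal]
        push_cast
        calc -(r:ℂ) * (starRingEnd ℂ u) * (-(r:ℂ) * u)
            = ((r:ℂ) * (r:ℂ)) * ((starRingEnd ℂ u) * u) := by ring
          _ = (r:ℂ) * (r:ℂ) := by rw [huu, mul_one]
      have hct : (starRingEnd ℂ (-(r : ℂ) * u)) * t = ((-(r * a) : ℝ) : ℂ) := by
        rw [map_mul, map_neg, Complex.conj_ofReal]
        push_cast
        calc -(r:ℂ) * (starRingEnd ℂ u) * t = -(r:ℂ) * ((starRingEnd ℂ u) * t) := by ring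
          _ = -((r:ℂ) * (a:ℂ)) := by rw [hut]; ring
      have hcs : (-(r : ℂ) * u) * s = ((-(r * a) : ℝ) : ℂ) := by
        rw [him]
        push_cast
        calc -(r:ℂ) * u * (starRingEnd ℂ t) = -(r:ℂ) * (u * (starRingEnd ℂ t)) := by ring
          _ = -((r:ℂ) * (a:ℂ)) := by rw [hut']; ring
      rw [hcc, hct, hcs] at h
      have hre := (Complex.le_def.mp h).1
      simpa [Complex.add_re, Complex.re_ofReal_mul, hP', hQ'] using
        le_trans hre (le_of_eq (by
          simp [Complex.add_re, Complex.re_ofReal_mul]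
          ring))
    have hd := discrim_le_zero hpoly
    rw [discrim] at hd
    have habs : ‖t‖ = a := by rw [ha']
    nlinarith [hd]

private lemma aux_map_nonneg (φ : A →⋆ₙₐ[ℂ] B) {a : A} (ha : 0 ≤ a) : 0 ≤ φ a := by
  rw [StarOrderedRing.nonneg_iff] at ha
  induction ha using AddSubmonoid.closure_induction with
  | mem x hx =>
      obtain ⟨s, rfl⟩ := hx
      simpa [map_mul, map_star] using star_mul_self_nonneg (φ s)
  | zero => simp
  | add x y _ _ hx hy => simpa [map_add] using add_nonneg hx hy

private lemma aux_tendsto (φ : A →⋆ₙₐ[ℂ] B) (hφ : Isometry φ)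
    (hnd : Dense ((Submodule.span ℂ {x : B | ∃ (a : A) (b : B), x = φ a * b} : Submodule ℂ B)
      : Set B))
    (τ : B →L[ℂ] ℂ) (hτ : ‖τ‖ ≤ 1) (b : B) :
    Tendsto (fun e : A => τ (φ e * b)) (approximateUnit A) (𝓝 (τ b)) := by
  have hφc : Continuous φ := hφ.continuous
  have hφn : ∀ a : A, ‖φ a‖ = ‖a‖ := fun a => hφ.norm_map_of_map_zero (map_zero φ) a
  have hspan : ∀ x ∈ Submodule.span ℂ {x : B | ∃ (a : A) (b : B), x = φ a * b},
      Tendsto (fun e : A => τ (φ e * x)) (approximateUnit A) (𝓝 (τ x)) := by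
    intro x hx
    induction hx using Submodule.span_induction with
    | mem x hx =>
        obtain ⟨a, c, rfl⟩ := hx
        have h1 : Tendsto (fun e : A => e * a) (approximateUnit A) (𝓝 a) :=
          (increasingApproximateUnit A).tendsto_mul_right a
        have h2 : Continuous fun a' : A => τ (φ a' * c) :=
          τ.continuous.comp ((continuous_mul_right c).comp hφc)
        refine ((h2.tendsto a).comp h1).congr fun e => ?_
        simp [Function.comp, map_mul, mul_assoc]
    | zero => simpa using tendsto_const_nhds
    | add x y _ _ hx' hy' => simpa [mul_add, map_add] using hx'.add hy'
    | smul c x _ hx' => simpa [mul_smul_comm, map_smul, smul_eq_mul] using hx'.const_mul c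
  rw [Metric.tendsto_nhds]
  intro ε hε
  obtain ⟨x, hxs, hxd⟩ := hnd.exists_dist_lt b (by positivity : (0 : ℝ) < ε / 4)
  have h1 := hspan x hxs
  rw [Metric.tendsto_nhds] at h1
  filter_upwards [h1 (ε / 4) (by positivity),
    (increasingApproximateUnit A).eventually_norm] with e he1 he2
  have hbx : ‖b - x‖ < ε / 4 := by rwa [← dist_eq_norm]
  have hkey : ∀ z : B, ‖τ (φ e * z)‖ ≤ ‖z‖ := by
    intro z
    calc ‖τ (φ e * z)‖ ≤ ‖τ‖ * ‖φ e * z‖ := τ.le_opNorm _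
      _ ≤ 1 * (‖φ e‖ * ‖z‖) := by
          gcongr
          exact norm_mul_le _ _
      _ = ‖e‖ * ‖z‖ := by rw [one_mul, hφn]
      _ ≤ 1 * ‖z‖ := by gcongr
      _ = ‖z‖ := one_mul _
  have hb1 : ‖τ (φ e * b) - τ (φ e * x)‖ ≤ ε / 4 := by
    rw [← map_sub, ← mul_sub]
    exact (hkey (b - x)).trans hbx.le
  have hb3 : ‖τ x - τ b‖ ≤ ε / 4 := by
    rw [← map_sub]
    calc ‖τ (x - b)‖ ≤ ‖τ‖ * ‖x - b‖ := τ.le_opNorm _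
      _ ≤ 1 * ‖x - b‖ := by gcongr
      _ = ‖b - x‖ := by rw [one_mul, norm_sub_rev]
      _ ≤ ε / 4 := hbx.le
  have htr := dist_triangle4 (τ (φ e * b)) (τ (φ e * x)) (τ x) (τ b)
  simp only [dist_eq_norm] at htr he1 ⊢
  linarith

private lemma aux_norm (φ : A →⋆ₙₐ[ℂ] B) (hφ : Isometry φ)
    (hnd : Dense ((Submodule.span ℂ {x : B | ∃ (a : A) (b : B), x = φ a * b} : Submodule ℂ B)
      : Set B))
    (τ : B →L[ℂ] ℂ) (hpos : ∀ c : B, 0 ≤ c → 0 ≤ τ c) (hn : ‖τ‖ = 1)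
    (ψ : A →L[ℂ] ℂ) (hψ : ∀ a, ψ a = τ (φ a)) : ‖ψ‖ = 1 := by
  have hφn : ∀ a : A, ‖φ a‖ = ‖a‖ := fun a => hφ.norm_map_of_map_zero (map_zero φ) a
  have hub : ‖ψ‖ ≤ 1 := by
    refine ContinuousLinearMap.opNorm_le_bound _ zero_le_one fun a => ?_
    rw [hψ]
    calc ‖τ (φ a)‖ ≤ ‖τ‖ * ‖φ a‖ := τ.le_opNorm _
      _ = 1 * ‖a‖ := by rw [hn, hφn]
  refine le_antisymm hub ?_
  by_contra hlt
  push_neg at hlt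
  set n := ‖ψ‖ with hn'
  have hn0 : 0 ≤ n := norm_nonneg _
  set r : ℝ := Real.sqrt ((n + 1) / 2) with hr'
  have hr2 : r ^ 2 = (n + 1) / 2 := Real.sq_sqrt (by positivity)
  have hr0 : 0 ≤ r := Real.sqrt_nonneg _
  have hr1 : r < 1 := by nlinarith
  obtain ⟨b, hb1, hb2⟩ : ∃ b : B, ‖b‖ < 1 ∧ r < ‖τ b‖ := by
    have : r < ‖τ‖ := by rw [hn]; exact hr1
    obtain ⟨b, hb1, hb2⟩ := τ.exists_lt_apply_of_lt_opNorm this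
    exact ⟨b, hb1, hb2⟩
  have htend := aux_tendsto φ hφ hnd τ hn.le b
  have hev1 : ∀ᶠ e in approximateUnit A, r < ‖τ (φ e * b)‖ :=
    htend.norm.eventually_const_lt hb2
  haveI : (approximateUnit A).NeBot := (increasingApproximateUnit A).neBot
  obtain ⟨e, he0, hen, her⟩ := ((increasingApproximateUnit A).eventually_nonneg.and
    (((increasingApproximateUnit A).eventually_norm).and hev1)).exists
  obtain ⟨hen, her⟩ := (⟨hen, her⟩ : _ ∧ _)
  have hsa : star (φ e) = φ e := by
    rw [← map_star]
    exact congrArg φ (IsSelfAdjoint.of_nonneg he0).star_eq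
  have hcs := aux_cs τ hpos (φ e) b
  rw [hsa] at hcs
  have hre1 : 0 ≤ (τ (star (φ e) * φ e)).re := (aux_nonneg_re hpos (φ e)).1
  have hre2 : 0 ≤ (τ (star b * b)).re := (aux_nonneg_re hpos b).1
  rw [hsa] at hre1
  have hb1' : (τ (φ e * φ e)).re ≤ n := by
    have h1 : φ e * φ e = φ (e * e) := (map_mul φ e e).symm
    calc (τ (φ e * φ e)).re ≤ ‖τ (φ e * φ e)‖ := Complex.re_le_norm _
      _ = ‖ψ (e * e)‖ := by rw [h1, hψ]
      _ ≤ ‖ψ‖ * ‖e * e‖ := ψ.le_opNorm _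
      _ ≤ n * (‖e‖ * ‖e‖) := by rw [← hn']; gcongr; exact norm_mul_le _ _
      _ ≤ n * (1 * 1) := by gcongr
      _ = n := by ring
  have hb2' : (τ (star b * b)).re ≤ 1 := by
    calc (τ (star b * b)).re ≤ ‖τ (star b * b)‖ := Complex.re_le_norm _
      _ ≤ ‖τ‖ * ‖star b * b‖ := τ.le_opNorm _
      _ = 1 * (‖b‖ * ‖b‖) := by rw [hn, CStarRing.norm_star_mul_self]
      _ ≤ 1 * (1 * 1) := by gcongr
      _ = 1 := by ring
  have hchain : r ^ 2 < n := by
    calc r ^ 2 < ‖τ (φ e * b)‖ ^ 2 := by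
          have := pow_lt_pow_left₀ her hr0 (two_ne_zero)
          simpa using this
      _ ≤ (τ (φ e * φ e)).re * (τ (star b * b)).re := hcs
      _ ≤ n * 1 := mul_le_mul hb1' hb2' hre2 hn0
      _ = n := mul_one n
  rw [hr2] at hchain
  linarith

end Aux

/-- Lemma 2.2: if `A ⊆ B` is a nondegenerate inclusion of separable C*-algebras and
the tracial state space `T₁(A)` is weak-* compact, then so is `T₁(B)`. -/
theorem tracialStates_isCompact_of_nondegenerate_inclusion
    {A B : Type*}
    [NonUnitalCStarAlgebra A] [PartialOrder A] [StarOrderedRing A]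
    [TopologicalSpace.SeparableSpace A]
    [NonUnitalCStarAlgebra B] [PartialOrder B] [StarOrderedRing B]
    [TopologicalSpace.SeparableSpace B]
    (φ : A →⋆ₙₐ[ℂ] B) (hφ : Isometry φ)
    (hnd : Dense ((Submodule.span ℂ {x : B | ∃ (a : A) (b : B), x = φ a * b} : Submodule ℂ B)
      : Set B))
    (hA : IsCompact (tracialStates A)) :
    IsCompact (tracialStates B) := by
  have hφn : ∀ a : A, ‖φ a‖ = ‖a‖ := fun a => hφ.norm_map_of_map_zero (map_zero φ) a
  -- the restriction map
  let rmap : WeakDual ℂ B → WeakDual ℂ A := fun τ =>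
    { toFun := fun a => τ (φ a)
      map_add' := fun a₁ a₂ => by simp [map_add]
      map_smul' := fun c a => by simp [map_smul]
      cont := (WeakDual.toStrongDual τ).continuous.comp hφ.continuous }
  have hrcont : Continuous rmap :=
    WeakDual.continuous_of_continuous_eval fun a => WeakDual.eval_continuous (φ a)
  -- the closed cone of nonnegative complex numbers
  have hcone : IsClosed {z : ℂ | 0 ≤ z} := by
    have : {z : ℂ | 0 ≤ z} = Complex.re ⁻¹' Set.Ici 0 ∩ Complex.im ⁻¹' {0} := by
      ext z
      simp only [Set.mem_setOf_eq, Complex.le_def, Set.mem_inter_iff, Set.mem_preimage,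
        Set.mem_Ici, Set.mem_singleton_iff, Complex.zero_re, Complex.zero_im]
      tauto
    rw [this]
    exact (isClosed_Ici.preimage Complex.continuous_re).inter
      (isClosed_singleton.preimage Complex.continuous_im)
  -- the compact ball and the closed constraint set
  set K : Set (WeakDual ℂ B) := WeakDual.toStrongDual ⁻¹' Metric.closedBall 0 1 with hK'
  have hK : IsCompact K := WeakDual.isCompact_closedBall (𝕜 := ℂ) 0 1
  set C : Set (WeakDual ℂ B) :=
    ({τ : WeakDual ℂ B | ∀ c : B, 0 ≤ c → 0 ≤ τ c} ∩
      {τ : WeakDual ℂ B | ∀ x y : B, τ (x * y) = τ (y * x)}) ∩ rmap ⁻¹' tracialStates A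
    with hC'
  have hC : IsClosed C := by
    refine IsClosed.inter (IsClosed.inter ?_ ?_) (hA.isClosed.preimage hrcont)
    · have : {τ : WeakDual ℂ B | ∀ c : B, 0 ≤ c → 0 ≤ τ c} =
          ⋂ (c : B) (_ : 0 ≤ c), (fun τ : WeakDual ℂ B => τ c) ⁻¹' {z : ℂ | 0 ≤ z} := by
        ext τ; simp
      rw [this]
      exact isClosed_iInter fun c => isClosed_iInter fun _ =>
        hcone.preimage (WeakDual.eval_continuous c)
    · have : {τ : WeakDual ℂ B | ∀ x y : B, τ (x * y) = τ (y * x)} =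
          ⋂ (x : B) (y : B), {τ : WeakDual ℂ B | τ (x * y) = τ (y * x)} := by
        ext τ; simp
      rw [this]
      exact isClosed_iInter fun x => isClosed_iInter fun y =>
        isClosed_eq (WeakDual.eval_continuous _) (WeakDual.eval_continuous _)
  have hsub : tracialStates B = K ∩ C := by
    ext τ
    constructor
    · rintro ⟨h1, h2, h3⟩
      refine ⟨?_, ⟨h2, h3⟩, ?_, ?_, ?_⟩
      · simp only [hK', Set.mem_preimage, Metric.mem_closedBall, dist_zero_right]
        exact h1.le
      · -- norm of the restriction is 1
        exact aux_norm φ hφ hnd (WeakDual.toStrongDual τ) h2 h1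
          (WeakDual.toStrongDual (rmap τ)) (fun a => rfl)
      · exact fun c hc => h2 _ (aux_map_nonneg φ hc)
      · intro x y
        show τ (φ (x * y)) = τ (φ (y * x))
        rw [map_mul φ x y, map_mul φ y x]
        exact h3 _ _
    · rintro ⟨hk, ⟨h2, h3⟩, hr⟩
      obtain ⟨hr1, _, _⟩ := hr
      refine ⟨?_, h2, h3⟩
      have hle : ‖WeakDual.toStrongDual τ‖ ≤ 1 := by
        simpa [hK', dist_zero_right] using hk
      have hge : 1 ≤ ‖WeakDual.toStrongDual τ‖ := by
        rw [← hr1]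
        refine ContinuousLinearMap.opNorm_le_bound _ (norm_nonneg _) fun a => ?_
        calc ‖(WeakDual.toStrongDual (rmap τ)) a‖ = ‖τ (φ a)‖ := rfl
          _ ≤ ‖WeakDual.toStrongDual τ‖ * ‖φ a‖ := (WeakDual.toStrongDual τ).le_opNorm _
          _ = ‖WeakDual.toStrongDual τ‖ * ‖a‖ := by rw [hφn]
      linarith
  rw [hsub]
  exact hK.inter_right hC
end

section
/- Let B be a unital C*-algebra, let G be a finite abelian group, and let β be an action of G on B. Suppose {e_g}_{g∈G} is a family of projections in B (self-adjoint idempotents) with Σ_{g∈G} e_g = 1 and β_g(e_h) = e_{gh} for all g, h ∈ G. For each character γ ∈ Ĝ define u(γ) := Σ_{g∈G} conj(γ(g))·e_g. Then each u(γ) is a unitary element of B, the map γ ↦ u(γ) is a group homomorphism from Ĝ to the unitary group of B, and β_g(u(γ)) = γ(g)·u(γ) for all g ∈ G and γ ∈ Ĝ. (One direction of Proposition 3.3 of the paper, stated for an arbitrary unital C*-algebra with a G-action; in the paper it is applied with B the central sequence algebra F(A).) -/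
lemma pairwise_orth_of_partition
    {B : Type*} [NormedRing B] [StarRing B] [CStarRing B] [NormedAlgebra ℂ B]
    [StarModule ℂ B] [CompleteSpace B]
    {G : Type*} [Fintype G] [DecidableEq G]
    (e : G → B)
    (he_sa : ∀ g, IsSelfAdjoint (e g))
    (he_idem : ∀ g, IsIdempotentElem (e g))
    (he_sum : ∑ g : G, e g = 1) :
    ∀ g h : G, g ≠ h → e g * e h = 0 := by
  letI : CStarAlgebra B := {}
  letI := CStarAlgebra.spectralOrder B
  haveI := CStarAlgebra.spectralOrderedRing B
  intro g h hgh
  have key : ∑ k ∈ Finset.univ.erase g, e g * e k * e g = 0 := by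
    have h1 : (1 : B) - e g = ∑ k ∈ Finset.univ.erase g, e k := by
      rw [← he_sum, ← Finset.add_sum_erase _ _ (Finset.mem_univ g)]
      abel
    have : e g * ((1 : B) - e g) * e g = 0 := by
      have := he_idem g
      unfold IsIdempotentElem at this
      simp [mul_sub, sub_mul, mul_one, this]
    rw [h1] at this
    rw [← this, Finset.mul_sum, Finset.sum_mul]
  have hterm : ∀ k ∈ Finset.univ.erase g, e g * e k * e g = star (e k * e g) * (e k * e g) := by
    intro k _
    rw [star_mul, (he_sa k).star_eq, (he_sa g).star_eq]
    have := he_idem k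
    unfold IsIdempotentElem at this
    calc e g * e k * e g = e g * (e k * e k) * e g := by rw [this]
    _ = e g * e k * (e k * e g) := by noncomm_ring
  rw [Finset.sum_congr rfl hterm] at key
  have hzero : star (e h * e g) * (e h * e g) = 0 := by
    have := (Finset.sum_eq_zero_iff_of_nonneg
      (fun k _ => star_mul_self_nonneg (e k * e g))).mp key h
      (Finset.mem_erase.mpr ⟨Ne.symm hgh, Finset.mem_univ h⟩)
    exact this
  have := (CStarRing.star_mul_self_eq_zero_iff (e h * e g)).mp hzero
  calc e g * e h = star (e h * e g) := by
        rw [star_mul, (he_sa g).star_eq, (he_sa h).star_eq]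
  _ = 0 := by rw [this, star_zero]

lemma char_conj_mul {G : Type*} [CommGroup G] [Fintype G] (γ : G →* ℂˣ) (g : G) :
    (starRingEnd ℂ) ((γ g : ℂ)) * (γ g : ℂ) = 1 := by
  have h1 : ((γ g : ℂ))^(Fintype.card G) = 1 := by
    have : (γ g)^(Fintype.card G) = 1 := by
      rw [← map_pow, pow_card_eq_one, map_one]
    have h2 := congrArg (Units.val) this
    push_cast at h2
    exact h2
  have habs : ‖((γ g : ℂ))‖ = 1 := by
    have := congrArg norm h1
    rw [norm_pow, norm_one] at this
    have h0 : (0:ℝ) ≤ ‖((γ g : ℂ))‖ := norm_nonneg _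
    by_contra hne
    rcases lt_or_gt_of_ne hne with hlt | hgt
    · have := pow_lt_one₀ h0 hlt (Fintype.card_pos.ne' : Fintype.card G ≠ 0)
      linarith
    · have := one_lt_pow₀ hgt (Fintype.card_pos.ne' : Fintype.card G ≠ 0)
      linarith
  rw [mul_comm, Complex.mul_conj, Complex.normSq_eq_norm_sq, habs]
  norm_num

/-- One direction of Proposition 3.3: given a partition of unity `{e_g}` consisting of
projections in a unital C*-algebra `B` satisfying `β_g(e_h) = e_{gh}` for an action `β`
of a finite abelian group `G`, the elements `u(γ) = Σ_g conj(γ(g)) • e_g` (for characters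
`γ : G →* ℂˣ`) form a unitary representation of the dual group `Ĝ` satisfying
`β_g(u(γ)) = γ(g) • u(γ)`. -/
theorem rohlin_projections_give_unitary_representation
    {B : Type*} [NormedRing B] [StarRing B] [CStarRing B] [NormedAlgebra ℂ B]
    [StarModule ℂ B] [CompleteSpace B]
    {G : Type*} [CommGroup G] [Fintype G]
    (β : G → B ≃⋆ₐ[ℂ] B)
    (hβ1 : ∀ b : B, β 1 b = b)
    (hβmul : ∀ (g h : G) (b : B), β (g * h) b = β g (β h b))
    (e : G → B)
    (he_sa : ∀ g, IsSelfAdjoint (e g))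
    (he_idem : ∀ g, IsIdempotentElem (e g))
    (he_sum : ∑ g : G, e g = 1)
    (he_act : ∀ g h : G, β g (e h) = e (g * h))
    (u : (G →* ℂˣ) → B)
    (hu : ∀ γ : G →* ℂˣ, u γ = ∑ g : G, (starRingEnd ℂ) ((γ g : ℂ)) • e g) :
    (∀ γ : G →* ℂˣ, u γ ∈ unitary B) ∧
    (u 1 = 1) ∧
    (∀ γ₁ γ₂ : G →* ℂˣ, u (γ₁ * γ₂) = u γ₁ * u γ₂) ∧
    (∀ (g : G) (γ : G →* ℂˣ), β g (u γ) = (γ g : ℂ) • u γ) := by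
  classical
  have horth := pairwise_orth_of_partition e he_sa he_idem he_sum
  -- key product formula
  have hprod : ∀ (c d : G → ℂ),
      (∑ g : G, c g • e g) * (∑ h : G, d h • e h) = ∑ g : G, (c g * d g) • e g := by
    intro c d
    rw [Finset.sum_mul]
    refine Finset.sum_congr rfl fun g _ => ?_
    rw [Finset.mul_sum]
    rw [Finset.sum_eq_single g]
    · rw [smul_mul_smul_comm, (he_idem g)]
    · intro h _ hne
      rw [smul_mul_smul_comm, horth g h (Ne.symm hne), smul_zero]
    · intro h; exact absurd (Finset.mem_univ g) h
  have hstar : ∀ γ : G →* ℂˣ, star (u γ) = ∑ g : G, (γ g : ℂ) • e g := by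
    intro γ
    rw [hu, star_sum]
    refine Finset.sum_congr rfl fun g _ => ?_
    rw [star_smul, (he_sa g).star_eq, Complex.star_def, Complex.conj_conj]
  have hunit : ∀ γ : G →* ℂˣ, u γ ∈ unitary B := by
    intro γ
    constructor
    · rw [hstar, hu, hprod]
      rw [← he_sum]
      refine Finset.sum_congr rfl fun g _ => ?_
      rw [mul_comm, char_conj_mul γ g, one_smul]
    · rw [hstar, hu, hprod]
      rw [← he_sum]
      refine Finset.sum_congr rfl fun g _ => ?_
      rw [char_conj_mul γ g, one_smul]
  refine ⟨hunit, ?_, ?_, ?_⟩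
  · rw [hu]
    simp only [MonoidHom.one_apply, Units.val_one, map_one, one_smul]
    exact he_sum
  · intro γ₁ γ₂
    rw [hu, hu, hu, hprod]
    refine Finset.sum_congr rfl fun g _ => ?_
    simp [map_mul]
  · intro g γ
    rw [hu, map_sum]
    simp only [map_smul, he_act]
    rw [Finset.smul_sum]
    refine Fintype.sum_equiv (Equiv.mulLeft g) _ _ fun x => ?_
    simp only [Equiv.coe_mulLeft]
    rw [smul_smul]
    congr 1
    rw [map_mul]
    push_cast
    rw [map_mul, ← mul_assoc, mul_comm ((γ g : ℂ)), char_conj_mul γ g, one_mul]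
end

section
/- Let B be a unital C*-algebra, let G be a finite abelian group, and let β be an action of G on B. Suppose u is a unitary representation of the dual group Ĝ on B, i.e. each u(γ) is a unitary element of B and γ ↦ u(γ) is a group homomorphism, satisfying β_g(u(γ)) = γ(g)·u(γ) for all g ∈ G and γ ∈ Ĝ. For each g ∈ G define e_g := (1/|G|)·Σ_{γ∈Ĝ} γ(g)·u(γ). Then each e_g is a projection in B (self-adjoint idempotent), Σ_{g∈G} e_g = 1, and β_g(e_h) = e_{gh} for all g, h ∈ G. (The converse direction of Proposition 3.3 of the paper, stated for an arbitrary unital C*-algebra with a G-action; in the paper it is applied with B the central sequence algebra F(A).) -/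
section aux

variable {G : Type*} [CommGroup G] [Fintype G]

lemma rohlin_aux_herou : HasEnoughRootsOfUnity ℂ (Monoid.exponent G) := by
  have : NeZero ((Monoid.exponent G : ℂ)) := by
    refine ⟨?_⟩
    exact_mod_cast Nat.cast_ne_zero.mpr (Monoid.exponent_ne_zero_of_finite)
  infer_instance

lemma rohlin_aux_card [Fintype (G →* ℂˣ)] :
    Fintype.card (G →* ℂˣ) = Fintype.card G := by
  have := rohlin_aux_herou (G := G)
  obtain ⟨e⟩ := CommGroup.monoidHom_mulEquiv_of_hasEnoughRootsOfUnity G ℂ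
  exact Fintype.card_congr e.toEquiv

lemma rohlin_aux_sep {g : G} (hg : g ≠ 1) : ∃ φ : G →* ℂˣ, φ g ≠ 1 := by
  have := rohlin_aux_herou (G := G)
  exact CommGroup.exists_apply_ne_one_of_hasEnoughRootsOfUnity G ℂ hg

/-- orthogonality: sum over the group of a nontrivial character vanishes. -/
lemma rohlin_aux_sum {γ : G →* ℂˣ} (hγ : γ ≠ 1) : ∑ g : G, (γ g : ℂ) = 0 := by
  obtain ⟨h, hh⟩ : ∃ h : G, γ h ≠ 1 := by
    by_contra hc
    push_neg at hc
    exact hγ (MonoidHom.ext fun x => hc x)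
  have key : (γ h : ℂ) * ∑ g : G, (γ g : ℂ) = ∑ g : G, (γ g : ℂ) := by
    rw [Finset.mul_sum]
    refine Fintype.sum_equiv (Equiv.mulLeft h) _ _ fun g => ?_
    simp [map_mul]
  have hne : (γ h : ℂ) ≠ 1 := by
    intro hx
    exact hh (Units.ext hx)
  have : ((γ h : ℂ) - 1) * ∑ g : G, (γ g : ℂ) = 0 := by
    rw [sub_mul, one_mul, key, sub_self]
  rcases mul_eq_zero.mp this with h1 | h2
  · exact absurd (by linear_combination h1 : (γ h : ℂ) = 1) hne
  · exact h2

lemma rohlin_aux_conj (γ : G →* ℂˣ) (g : G) :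
    (starRingEnd ℂ) (γ g : ℂ) = ((γ⁻¹) g : ℂ) := by
  have hpow : ((γ g : ℂ)) ^ Fintype.card G = 1 := by
    rw [← Units.val_pow_eq_pow_val, ← map_pow, pow_card_eq_one, map_one, Units.val_one]
  have habs : ‖(γ g : ℂ)‖ = 1 :=
    Complex.norm_eq_one_of_pow_eq_one hpow (Fintype.card_ne_zero)
  rw [← RCLike.inv_eq_conj habs]
  simp

end aux

/-- The converse direction of Proposition 3.3: given a unitary representation `u` of the
dual group `Ĝ` of a finite abelian group `G` in a unital C*-algebra `B` satisfying
`β_g(u(γ)) = γ(g) • u(γ)`, the elements `e_g = (1/|G|) • Σ_γ γ(g) • u(γ)` form a partition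
of unity consisting of projections with `β_g(e_h) = e_{gh}`. -/
theorem unitary_representation_gives_rohlin_projections
    {B : Type*} [NormedRing B] [StarRing B] [CStarRing B] [NormedAlgebra ℂ B]
    [StarModule ℂ B] [CompleteSpace B]
    {G : Type*} [CommGroup G] [Fintype G] [Fintype (G →* ℂˣ)]
    (β : G → B ≃⋆ₐ[ℂ] B)
    (hβ1 : ∀ b : B, β 1 b = b)
    (hβmul : ∀ (g h : G) (b : B), β (g * h) b = β g (β h b))
    (u : (G →* ℂˣ) → B)
    (hu_unitary : ∀ γ : G →* ℂˣ, u γ ∈ unitary B)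
    (hu_one : u 1 = 1)
    (hu_mul : ∀ γ₁ γ₂ : G →* ℂˣ, u (γ₁ * γ₂) = u γ₁ * u γ₂)
    (hu_act : ∀ (g : G) (γ : G →* ℂˣ), β g (u γ) = (γ g : ℂ) • u γ)
    (e : G → B)
    (he : ∀ g : G, e g = ((Fintype.card G : ℂ))⁻¹ • ∑ γ : G →* ℂˣ, (γ g : ℂ) • u γ) :
    (∀ g : G, IsSelfAdjoint (e g)) ∧
    (∀ g : G, IsIdempotentElem (e g)) ∧
    (∑ g : G, e g = 1) ∧
    (∀ g h : G, β g (e h) = e (g * h)) := by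
  set n : ℂ := (Fintype.card G : ℂ) with hn
  have hn0 : n ≠ 0 := Nat.cast_ne_zero.mpr Fintype.card_ne_zero
  -- star of u
  have hustar : ∀ γ : G →* ℂˣ, star (u γ) = u γ⁻¹ := by
    intro γ
    have h1 : u γ * u γ⁻¹ = 1 := by
      rw [← hu_mul, mul_inv_cancel γ, hu_one]
    have h2 : star (u γ) * u γ = 1 := (hu_unitary γ).1
    calc star (u γ) = star (u γ) * (u γ * u γ⁻¹) := by rw [h1, mul_one]
    _ = (star (u γ) * u γ) * u γ⁻¹ := by rw [mul_assoc]
    _ = u γ⁻¹ := by rw [h2, one_mul]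
  refine ⟨?_, ?_, ?_, ?_⟩
  · -- self-adjoint
    intro g
    rw [IsSelfAdjoint, he g, star_smul, star_sum]
    congr 1
    · simp [hn, star_inv₀, Complex.star_def, Complex.conj_natCast]
    · refine Fintype.sum_equiv (Equiv.inv _) _ _ fun γ => ?_
      rw [star_smul, hustar, Complex.star_def, rohlin_aux_conj]
      simp
  · -- idempotent
    intro g
    set S : B := ∑ γ : G →* ℂˣ, (γ g : ℂ) • u γ with hS
    have hSS : S * S = n • S := by
      rw [hS, Finset.sum_mul_sum]
      have : ∀ γ₁ : G →* ℂˣ, ∑ γ₂ : G →* ℂˣ,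
          ((γ₁ g : ℂ) • u γ₁) * ((γ₂ g : ℂ) • u γ₂) = S := by
        intro γ₁
        refine Fintype.sum_equiv (Equiv.mulLeft γ₁) _ _ fun γ₂ => ?_
        simp only [Equiv.coe_mulLeft]
        rw [smul_mul_smul_comm, ← hu_mul]
        congr 1
      rw [Finset.sum_congr rfl fun γ₁ _ => this γ₁, Finset.sum_const,
        Finset.card_univ, rohlin_aux_card, hn]
      exact (Nat.cast_smul_eq_nsmul ℂ _ _).symm
    have : e g * e g = (n⁻¹ • S) * (n⁻¹ • S) := by rw [he g]
    rw [IsIdempotentElem, this, smul_mul_smul_comm, hSS, smul_smul, mul_assoc,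
      inv_mul_cancel₀ hn0, mul_one, he g]
  · -- sum to one
    have : ∑ g : G, e g = n⁻¹ • ∑ γ : G →* ℂˣ, (∑ g : G, (γ g : ℂ)) • u γ := by
      simp only [he]
      rw [← Finset.smul_sum, Finset.sum_comm]
      congr 1
      refine Finset.sum_congr rfl fun γ _ => ?_
      rw [Finset.sum_smul]
    rw [this, Finset.sum_eq_single (1 : G →* ℂˣ)]
    · simp only [MonoidHom.one_apply, Units.val_one, hu_one]
      rw [Finset.sum_const, Finset.card_univ, nsmul_eq_mul, mul_one, smul_smul,
        ← hn, inv_mul_cancel₀ hn0, one_smul]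
    · intro γ _ hγ
      rw [rohlin_aux_sum hγ, zero_smul]
    · intro h; exact absurd (Finset.mem_univ _) h
  · -- equivariance
    intro g h
    rw [he h, he (g * h), map_smul, map_sum]
    congr 1
    refine Finset.sum_congr rfl fun γ _ => ?_
    rw [map_smul, hu_act, smul_smul]
    congr 1
    push_cast [map_mul]
    ring
end

section
/- Let α be an action of a finite group G on a separable C*-algebra A. Assume there exists an increasing sequence (A_n)_{n∈ℕ} of C*-subalgebras of A, each invariant under every α_g, whose union is dense in A. Then there exists a sequence (h_n)_{n∈ℕ} such that each h_n is a positive contraction belonging to the fixed point algebra (A_n)^α = {a ∈ A_n : α_g(a) = a for all g ∈ G}, and (h_n) is an approximate unit for A, i.e. lim_n ‖h_n·x − x‖ = 0 for every x ∈ A. (Lemma 4.7 of the paper.) -/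
open Filter Topology


open scoped NNReal

section Mem

variable {A : Type*} [NonUnitalCStarAlgebra A] [PartialOrder A] [StarOrderedRing A]

open scoped ContinuousMapZero in
lemma cfcnHom_mem (S : NonUnitalStarSubalgebra ℂ A) (hS : IsClosed (S : Set A))
    {a : A} (ha : IsSelfAdjoint a) (haS : a ∈ S) (f : C(quasispectrum ℝ a, ℝ)₀) :
    cfcₙHom ha f ∈ S := by
  have h0 : ((0 : quasispectrum ℝ a) : ℝ) = 0 := rfl
  induction f using ContinuousMapZero.induction_on_of_compact with
  | zero => simpa using zero_mem S
  | id =>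
      have hid : (cfcₙHom ha) (ContinuousMapZero.id (quasispectrum ℝ a)) = a := cfcₙHom_id ha
      rw [hid]; exact haS
  | star_id =>
      have hid : (cfcₙHom ha) (ContinuousMapZero.id (quasispectrum ℝ a)) = a := cfcₙHom_id ha
      rw [map_star, hid]; exact star_mem haS
  | add f g hf hg => rw [map_add]; exact add_mem hf hg
  | mul f g hf hg => rw [map_mul]; exact mul_mem hf hg
  | smul r f hf =>
      rw [map_smul, ← Complex.coe_smul]
      exact SMulMemClass.smul_mem _ hf
  | frequently f hf =>
      exact hf.mem_of_closed <| hS.preimage (cfcₙHom_continuous ha)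

lemma cfcn_real_mem (S : NonUnitalStarSubalgebra ℂ A) (hS : IsClosed (S : Set A))
    (f : ℝ → ℝ) {a : A} (haS : a ∈ S) : cfcₙ f a ∈ S := by
  by_cases ha : IsSelfAdjoint a
  · by_cases hf : ContinuousOn f (quasispectrum ℝ a)
    · by_cases hf0 : f 0 = 0
      · rw [cfcₙ_apply f a hf hf0 ha]
        exact cfcnHom_mem S hS ha haS _
      · rw [cfcₙ_apply_of_not_map_zero a hf0]; exact zero_mem S
    · rw [cfcₙ_apply_of_not_continuousOn a hf]; exact zero_mem S
  · rw [cfcₙ_apply_of_not_predicate a ha]; exact zero_mem S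

lemma cfcn_nnreal_mem (S : NonUnitalStarSubalgebra ℂ A) (hS : IsClosed (S : Set A))
    (f : ℝ≥0 → ℝ≥0) {a : A} (ha : 0 ≤ a) (haS : a ∈ S) : cfcₙ f a ∈ S := by
  rw [cfcₙ_nnreal_eq_real f a ha]
  exact cfcn_real_mem S hS _ haS

end Mem
section Order

variable {A : Type*} [NonUnitalCStarAlgebra A] [PartialOrder A] [StarOrderedRing A]

lemma subalg_coe_nonneg_iff (S : NonUnitalStarSubalgebra ℂ A) {x : S} :
    0 ≤ x ↔ (0 : A) ≤ (x : A) := by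
  rw [← Subtype.coe_le_coe, ZeroMemClass.coe_zero]

noncomputable instance NonUnitalStarSubalgebra.instStarOrderedRing
    (S : NonUnitalStarSubalgebra ℂ A) [hS : IsClosed (S : Set A)] :
    StarOrderedRing S := by
  refine StarOrderedRing.of_nonneg_iff' (fun {x y} hxy z => ?_) (fun x => ?_)
  · rw [← Subtype.coe_le_coe] at hxy ⊢
    push_cast
    exact add_le_add le_rfl hxy
  · rw [subalg_coe_nonneg_iff]
    constructor
    · intro hx
      have hb : CFC.sqrt (x : A) ∈ S := cfcn_nnreal_mem S hS _ hx x.2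
      refine ⟨⟨CFC.sqrt (x : A), hb⟩, Subtype.ext ?_⟩
      show (x : A) = star (CFC.sqrt (x : A)) * CFC.sqrt (x : A)
      rw [(IsSelfAdjoint.of_nonneg (CFC.sqrt_nonneg _)).star_eq, CFC.sqrt_mul_sqrt_self (x : A) hx]
    · rintro ⟨s, rfl⟩
      push_cast
      exact star_mul_self_nonneg _

end Order

section ApproxUnit

lemma exists_approx_unit_finite {B : Type*} [NonUnitalCStarAlgebra B] [PartialOrder B]
    [StarOrderedRing B] {ι : Type*} [Finite ι] (x : ι → B) {ε : ℝ} (hε : 0 < ε) :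
    ∃ e : B, 0 ≤ e ∧ ‖e‖ ≤ 1 ∧ ∀ i, ‖e * x i - x i‖ < ε := by
  have H := CStarAlgebra.increasingApproximateUnit B
  haveI : (CStarAlgebra.approximateUnit B).NeBot := H.toIsApproximateUnit.neBot
  have h3 : ∀ᶠ e in CStarAlgebra.approximateUnit B, ∀ i, ‖e * x i - x i‖ < ε := by
    rw [eventually_all]
    intro i
    have ht := Metric.tendsto_nhds.mp (H.tendsto_mul_right (x i)) ε hε
    simpa [dist_eq_norm] using ht
  obtain ⟨e, h1, h2, h3⟩ := (H.eventually_nonneg.and (H.eventually_norm.and h3)).exists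
  exact ⟨e, h1, h2, h3⟩

end ApproxUnit
section Step

variable {A : Type*} [NonUnitalCStarAlgebra A] [PartialOrder A] [StarOrderedRing A]

lemma exists_star_mul_self_of_nonneg {a : A} (ha : 0 ≤ a) : ∃ s : A, a = star s * s :=
  ⟨CFC.sqrt a, by
    rw [(IsSelfAdjoint.of_nonneg (CFC.sqrt_nonneg _)).star_eq, CFC.sqrt_mul_sqrt_self a ha]⟩

lemma real_smul_nonneg {r : ℝ} (hr : 0 ≤ r) {a : A} (ha : 0 ≤ a) : 0 ≤ r • a := by
  obtain ⟨s, rfl⟩ := exists_star_mul_self_of_nonneg ha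
  have h1 : star ((Real.sqrt r : ℂ) • s) = (Real.sqrt r : ℂ) • star s := by
    rw [star_smul, Complex.star_def, Complex.conj_ofReal]
  have key : r • (star s * s) = star ((Real.sqrt r : ℂ) • s) * ((Real.sqrt r : ℂ) • s) := by
    rw [h1, smul_mul_smul_comm, ← Complex.ofReal_mul, Real.mul_self_sqrt hr, Complex.coe_smul]
  exact key ▸ star_mul_self_nonneg _

lemma exists_invariant_step
    {G : Type*} [Group G] [Finite G]
    (α : G → A ≃⋆ₐ[ℂ] A)
    (hα1 : ∀ a : A, α 1 a = a)
    (hαmul : ∀ (g h : G) (a : A), α (g * h) a = α g (α h a))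
    (S : NonUnitalStarSubalgebra ℂ A) (hS : IsClosed (S : Set A))
    (hinv : ∀ g : G, ∀ a ∈ S, α g a ∈ S)
    {ι : Type*} [Finite ι] (x : ι → A) (hx : ∀ i, x i ∈ S) {ε : ℝ} (hε : 0 < ε) :
    ∃ e : A, e ∈ S ∧ 0 ≤ e ∧ ‖e‖ ≤ 1 ∧ (∀ g : G, α g e = e) ∧ ∀ i, ‖e * x i - x i‖ < ε := by
  haveI := hS
  haveI : Fintype G := Fintype.ofFinite G
  have hcard : (0 : ℝ) < (Fintype.card G : ℝ) := by
    exact_mod_cast Fintype.card_pos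
  set N : ℝ := (Fintype.card G : ℝ) with hN
  let y : ι × G → S := fun p => ⟨α p.2 (x p.1), hinv _ _ (hx p.1)⟩
  obtain ⟨e₀, he₀n, he₀1, he₀⟩ := exists_approx_unit_finite y hε
  have he₀A : (0 : A) ≤ (e₀ : A) := (subalg_coe_nonneg_iff S).mp he₀n
  have he₀A1 : ‖(e₀ : A)‖ ≤ 1 := he₀1
  have hgg : ∀ (g : G) (a : A), α g (α g⁻¹ a) = a := fun g a => by
    rw [← hαmul, mul_inv_cancel, hα1]
  refine ⟨N⁻¹ • ∑ g : G, α g (e₀ : A), ?_, ?_, ?_, ?_, ?_⟩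
  · rw [← Complex.coe_smul]
    exact SMulMemClass.smul_mem _ (sum_mem fun g _ => hinv g _ e₀.2)
  · refine real_smul_nonneg (by positivity) (Finset.sum_nonneg fun g _ => ?_)
    obtain ⟨s, hs⟩ := exists_star_mul_self_of_nonneg he₀A
    rw [hs, map_mul, map_star]
    exact star_mul_self_nonneg _
  · rw [norm_smul]
    have hb : ‖∑ g : G, α g (e₀ : A)‖ ≤ N := by
      refine (norm_sum_le _ _).trans ?_
      calc ∑ g : G, ‖α g (e₀ : A)‖ ≤ ∑ _g : G, (1 : ℝ) :=
            Finset.sum_le_sum fun g _ => by rw [StarAlgEquiv.norm_map]; exact he₀A1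
        _ = N := by simp [hN]
    calc ‖N⁻¹‖ * ‖∑ g : G, α g (e₀ : A)‖ ≤ N⁻¹ * N := by
          rw [Real.norm_of_nonneg (by positivity)]
          exact mul_le_mul_of_nonneg_left hb (by positivity)
      _ = 1 := inv_mul_cancel₀ hcard.ne'
  · intro g
    have hmap : α g (N⁻¹ • ∑ g' : G, α g' (e₀ : A))
        = N⁻¹ • ∑ g' : G, α g (α g' (e₀ : A)) := by
      rw [← Complex.coe_smul, map_smul, map_sum, Complex.coe_smul]
    rw [hmap]
    congr 1
    refine Fintype.sum_equiv (Equiv.mulLeft g) _ _ fun g' => ?_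
    simp only [Equiv.coe_mulLeft]
    exact (hαmul g g' _).symm
  · intro i
    have key : ∀ g : G, ‖α g (e₀ : A) * x i - x i‖ < ε := by
      intro g
      have h1 : α g ((e₀ : A) * α g⁻¹ (x i) - α g⁻¹ (x i)) = α g (e₀ : A) * x i - x i := by
        rw [map_sub, map_mul, hgg]
      calc ‖α g (e₀ : A) * x i - x i‖ = ‖(e₀ : A) * α g⁻¹ (x i) - α g⁻¹ (x i)‖ := by
            rw [← h1, StarAlgEquiv.norm_map]
        _ < ε := he₀ (i, g⁻¹)
    have hsum : (N⁻¹ • ∑ g : G, α g (e₀ : A)) * x i - x i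
        = N⁻¹ • ∑ g : G, (α g (e₀ : A) * x i - x i) := by
      rw [smul_mul_assoc, Finset.sum_mul, Finset.sum_sub_distrib, smul_sub]
      congr 1
      rw [Finset.sum_const, Finset.card_univ, ← Nat.cast_smul_eq_nsmul ℝ, smul_smul,
        inv_mul_cancel₀ hcard.ne', one_smul]
    rw [hsum, norm_smul, Real.norm_of_nonneg (by positivity)]
    have hb : ‖∑ g : G, (α g (e₀ : A) * x i - x i)‖ < N * ε := by
      refine (norm_sum_le _ _).trans_lt ?_
      calc ∑ g : G, ‖α g (e₀ : A) * x i - x i‖ < ∑ _g : G, ε :=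
            Finset.sum_lt_sum_of_nonempty Finset.univ_nonempty fun g _ => key g
        _ = N * ε := by simp [hN, mul_comm]
    calc N⁻¹ * ‖∑ g : G, (α g (e₀ : A) * x i - x i)‖ < N⁻¹ * (N * ε) :=
          mul_lt_mul_of_pos_left hb (by positivity)
      _ = ε := by field_simp

end Step

/-- Lemma 4.7: let `α` be an action of a finite group `G` on a separable C*-algebra `A` and
let `(A_n)` be an increasing sequence of `α`-invariant C*-subalgebras with dense union.
Then `A` admits an approximate unit `(h_n)` of positive contractions with
`h_n ∈ (A_n)^α` for every `n`. -/
theorem exists_invariant_approximate_unit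
    {A : Type*} [NonUnitalCStarAlgebra A] [PartialOrder A] [StarOrderedRing A]
    [TopologicalSpace.SeparableSpace A]
    {G : Type*} [Group G] [Finite G]
    (α : G → A ≃⋆ₐ[ℂ] A)
    (hα1 : ∀ a : A, α 1 a = a)
    (hαmul : ∀ (g h : G) (a : A), α (g * h) a = α g (α h a))
    (𝒜 : ℕ → NonUnitalStarSubalgebra ℂ A)
    (h𝒜closed : ∀ n, IsClosed ((𝒜 n : Set A)))
    (h𝒜mono : Monotone 𝒜)
    (h𝒜inv : ∀ (n : ℕ) (g : G), ∀ a ∈ 𝒜 n, α g a ∈ 𝒜 n)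
    (h𝒜dense : Dense (⋃ n, (𝒜 n : Set A))) :
    ∃ h : ℕ → A,
      (∀ n, h n ∈ 𝒜 n) ∧
      (∀ n, 0 ≤ h n) ∧
      (∀ n, ‖h n‖ ≤ 1) ∧
      (∀ (n : ℕ) (g : G), α g (h n) = h n) ∧
      (∀ x : A, Tendsto (fun n => ‖h n * x - x‖) atTop (𝓝 0)) := by
  classical
  set U : Set A := ⋃ n, (𝒜 n : Set A) with hU
  haveI : TopologicalSpace.SeparableSpace U :=
    (TopologicalSpace.IsSeparable.of_separableSpace U).separableSpace
  haveI : Nonempty U := ⟨⟨0, Set.mem_iUnion.mpr ⟨0, zero_mem (𝒜 0)⟩⟩⟩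
  obtain ⟨u, hu⟩ := TopologicalSpace.exists_dense_seq U
  set d : ℕ → A := fun k => (u k : A) with hd
  have hdU : ∀ k, d k ∈ U := fun k => (u k).2
  have hdense : ∀ (z : A) (δ : ℝ), 0 < δ → ∃ k, ‖z - d k‖ < δ := by
    intro z δ hδ
    have h2 : U ⊆ closure (Set.range d) := by
      intro w hw
      have h3 : (⟨w, hw⟩ : U) ∈ closure (Set.range u) := hu _
      have h4 : Set.MapsTo (Subtype.val : U → A) (Set.range u) (Set.range d) := by
        rintro _ ⟨k, rfl⟩; exact ⟨k, rfl⟩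
      exact map_mem_closure continuous_subtype_val h3 h4
    have h1 : z ∈ closure (Set.range d) := by
      have h5 : z ∈ closure U := by rw [h𝒜dense.closure_eq]; trivial
      have h6 : closure U ⊆ closure (Set.range d) := by
        rw [← closure_closure (s := Set.range d)]
        exact closure_mono h2
      exact h6 h5
    rw [Metric.mem_closure_iff] at h1
    obtain ⟨w, ⟨k, rfl⟩, hwk⟩ := h1 δ hδ
    exact ⟨k, by rwa [dist_eq_norm] at hwk⟩
  have hm : ∀ k, ∃ n, d k ∈ 𝒜 n := fun k => Set.mem_iUnion.mp (hdU k)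
  choose m hmspec using hm
  have step : ∀ n : ℕ, ∃ e : A, e ∈ 𝒜 n ∧ 0 ≤ e ∧ ‖e‖ ≤ 1 ∧ (∀ g : G, α g e = e) ∧
      ∀ i : Fin (n + 1),
        ‖e * (if m i ≤ n then d i else 0) - (if m i ≤ n then d i else 0)‖ < ((n : ℝ) + 1)⁻¹ := by
    intro n
    refine exists_invariant_step α hα1 hαmul (𝒜 n) (h𝒜closed n) (h𝒜inv n)
      (fun i : Fin (n + 1) => if m i ≤ n then d i else 0) ?_ ?_
    · intro i; split_ifs with hc
      · exact h𝒜mono hc (hmspec i)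
      · exact zero_mem _
    · positivity
  choose h hmem hpos hnorm hinvh hest using step
  refine ⟨h, hmem, hpos, hnorm, hinvh, ?_⟩
  intro z
  rw [Metric.tendsto_atTop]
  intro ε hε
  obtain ⟨k, hk⟩ := hdense z (ε / 4) (by positivity)
  obtain ⟨N₀, hN₀⟩ := exists_nat_gt (4 / ε)
  refine ⟨max (max k (m k)) N₀, fun n hn => ?_⟩
  have hkn : k ≤ n := le_trans ((le_max_left _ _).trans (le_max_left _ _)) hn
  have hmkn : m k ≤ n := le_trans ((le_max_right _ _).trans (le_max_left _ _)) hn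
  have hN₀n : N₀ ≤ n := le_trans (le_max_right _ _) hn
  have h41 : (4 : ℝ) / ε < (n : ℝ) + 1 :=
    lt_of_lt_of_le hN₀ (by exact_mod_cast Nat.le_succ_of_le hN₀n)
  have hinvn : ((n : ℝ) + 1)⁻¹ < ε / 4 := by
    have := inv_strictAnti₀ (by positivity) h41
    rwa [inv_div] at this
  have hi : ‖h n * d k - d k‖ < ((n : ℝ) + 1)⁻¹ := by
    have := hest n ⟨k, Nat.lt_succ_of_le hkn⟩
    simpa [hmkn] using this
  have hmain : ‖h n * z - z‖ < ε := by
    have hid : h n * z - z = h n * (z - d k) + (h n * d k - d k) + (d k - z) := by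
      rw [mul_sub]; abel
    calc ‖h n * z - z‖ ≤ ‖h n * (z - d k)‖ + ‖h n * d k - d k‖ + ‖d k - z‖ := by
          rw [hid]; exact norm_add₃_le
      _ ≤ ‖h n‖ * ‖z - d k‖ + ‖h n * d k - d k‖ + ‖z - d k‖ := by
          rw [norm_sub_rev (d k) z]
          gcongr
          exact norm_mul_le _ _
      _ ≤ 1 * (ε / 4) + (ε / 4) + (ε / 4) := by
          gcongr <;> first
            | exact hnorm n
            | exact hk.le
            | exact (hi.trans hinvn).le
      _ < ε := by linarith
  rw [Real.dist_eq, sub_zero, abs_of_nonneg (norm_nonneg _)]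
  exact hmain
end

section
/- Let A be a C*-algebra and let (z_n)_{n∈ℕ} be a bounded sequence of invertible elements of the unitization Ã such that lim_n ‖(z_n*·z_n − 1)·a‖ = 0 for every a ∈ A. For each n set u_n := z_n·(z_n*·z_n)^{-1/2}. Then each u_n is a unitary element of Ã and lim_n ‖(z_n − u_n)·a‖ = 0 for every a ∈ A. (An intermediate claim established in the proof of Lemma 3.4 of the paper, via the identity ‖(z_n − u_n)·a‖ = ‖((z_n*z_n)^{1/2} − 1)·a‖.) -/
open Filter Topology
open scoped NNReal

lemma polar_helper {A : Type*} [NonUnitalCStarAlgebra A]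
    (z : Unitization ℂ A) (hz : IsUnit z) :
    z * CFC.rpow (star z * z) (-(1 / 2 : ℝ)) ∈ unitary (Unitization ℂ A) ∧
    ∀ a : Unitization ℂ A,
      ‖(z - z * CFC.rpow (star z * z) (-(1 / 2 : ℝ))) * a‖ ≤ ‖(star z * z - 1) * a‖ := by
  simp only [CFC.rpow_eq_pow]
  set p := star z * z with hp_def
  have hp : (0 : Unitization ℂ A) ≤ p := star_mul_self_nonneg z
  have hpu : IsUnit p := hz.star.mul hz
  have h0 : 0 ∉ spectrum ℝ≥0 p := spectrum.zero_notMem ℝ≥0 hpu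
  set r := p ^ (-(1 / 2 : ℝ)) with hr_def
  set b := p ^ (1 / 2 : ℝ) with hb_def
  have hr_nonneg : (0 : Unitization ℂ A) ≤ r := CFC.rpow_nonneg
  have hb_nonneg : (0 : Unitization ℂ A) ≤ b := CFC.rpow_nonneg
  have hr_sa : star r = r := (IsSelfAdjoint.of_nonneg hr_nonneg).star_eq
  have hb_sa : star b = b := (IsSelfAdjoint.of_nonneg hb_nonneg).star_eq
  have hbb : b * b = p := by
    rw [hb_def, ← CFC.rpow_add hpu]
    norm_num [CFC.rpow_one p hp]
  have hpr : p * r = b := by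
    conv_lhs => rw [← CFC.rpow_one p hp]
    rw [hr_def, ← CFC.rpow_add hpu]
    norm_num [hb_def]
  have hrp : r * p = b := by
    conv_lhs => rw [← CFC.rpow_one p hp]
    rw [hr_def, ← CFC.rpow_add hpu]
    norm_num [hb_def]
  have hbr : b * r = 1 := by
    rw [hr_def, hb_def, ← CFC.rpow_add hpu]
    norm_num [CFC.rpow_zero p hp]
  have hrb : r * b = 1 := by
    rw [hr_def, hb_def, ← CFC.rpow_add hpu]
    norm_num [CFC.rpow_zero p hp]
  have hr_unit : IsUnit r := ⟨⟨r, b, hrb, hbr⟩, rfl⟩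
  set u := z * r with hu_def
  have huu : star u * u = 1 := by
    rw [hu_def, star_mul, hr_sa]
    calc r * star z * (z * r) = r * p * r := by rw [hp_def]; noncomm_ring
      _ = b * r := by rw [hrp]
      _ = 1 := hbr
  have hu_unit : IsUnit u := hz.mul hr_unit
  have h1 : u * ↑hu_unit.unit⁻¹ = 1 := hu_unit.mul_val_inv
  have hv : star u = ↑hu_unit.unit⁻¹ := left_inv_eq_right_inv huu h1
  have huu' : u * star u = 1 := by rw [hv]; exact h1
  refine ⟨Unitary.mem_iff.mpr ⟨huu, huu'⟩, fun a => ?_⟩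
  -- norm identity ‖(z - u) a‖ = ‖(b - 1) a‖
  have hszu : star z * u = b := by rw [hu_def, ← mul_assoc, ← hp_def, hpr]
  have husz : star u * z = b := by
    rw [hu_def, star_mul, hr_sa, mul_assoc, ← hp_def, hrp]
  have hkey : star (z - u) * (z - u) = star (b - 1) * (b - 1) := by
    rw [star_sub, star_sub, hb_sa, star_one, sub_mul, sub_mul, mul_sub, mul_sub, mul_sub,
      mul_sub, huu, ← hp_def, hszu, husz, hbb]
    noncomm_ring
  have hnorm : ‖(z - u) * a‖ = ‖(b - 1) * a‖ := by
    have h2 : star ((z - u) * a) * ((z - u) * a) = star ((b - 1) * a) * ((b - 1) * a) := by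
      calc star ((z - u) * a) * ((z - u) * a)
          = star a * (star (z - u) * (z - u)) * a := by rw [star_mul]; noncomm_ring
        _ = star a * (star (b - 1) * (b - 1)) * a := by rw [hkey]
        _ = star ((b - 1) * a) * ((b - 1) * a) := by rw [star_mul]; noncomm_ring
    have h3 : ‖(z - u) * a‖ * ‖(z - u) * a‖ = ‖(b - 1) * a‖ * ‖(b - 1) * a‖ := by
      rw [← CStarRing.norm_star_mul_self, ← CStarRing.norm_star_mul_self, h2]
    rcases mul_self_eq_mul_self_iff.mp h3 with h | h
    · exact h
    · have h4 := norm_nonneg ((z - u) * a)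
      have h5 := norm_nonneg ((b - 1) * a)
      linarith
  rw [hnorm]
  -- now ‖(b-1) a‖ ≤ ‖(p-1) a‖ via c = (sqrt + 1)⁻¹
  have hcont : Continuous (fun x : ℝ≥0 => (NNReal.sqrt x + 1)⁻¹) :=
    (NNReal.continuous_sqrt.add continuous_const).inv₀ (fun x => ne_of_gt (add_pos_of_nonneg_of_pos zero_le one_pos))
  set c := cfc (fun x : ℝ≥0 => (NNReal.sqrt x + 1)⁻¹) p with hc_def
  have hb_cfc : b = cfc NNReal.sqrt p := by
    rw [hb_def, ← CFC.sqrt_eq_rpow, CFC.sqrt_eq_cfc]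
  have hb1 : b + 1 = cfc (fun x : ℝ≥0 => NNReal.sqrt x + 1) p := by
    rw [hb_cfc, ← cfc_const_one ℝ≥0 p, ← cfc_add p _ _]
  have hcb : c * (b + 1) = 1 := by
    rw [hb1, hc_def, ← cfc_mul _ _ p (hcont.continuousOn)]
    rw [← cfc_const_one ℝ≥0 p]
    exact cfc_congr fun x _ => inv_mul_cancel₀ (ne_of_gt (add_pos_of_nonneg_of_pos zero_le one_pos))
  have hfactor : (b + 1) * (b - 1) = p - 1 := by
    rw [← hbb]; noncomm_ring
  have hb1c : b - 1 = c * (p - 1) := by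
    rw [← hfactor, ← mul_assoc, hcb, one_mul]
  have hc_nnnorm : ‖c‖₊ ≤ 1 := by
    rw [hc_def]
    refine nnnorm_cfc_nnreal_le fun x hx => ?_
    exact inv_le_one_of_one_le₀ le_add_self
  have hc_norm : ‖c‖ ≤ 1 := by
    exact_mod_cast hc_nnnorm
  calc ‖(b - 1) * a‖ = ‖c * ((p - 1) * a)‖ := by rw [hb1c, mul_assoc]
    _ ≤ ‖c‖ * ‖(p - 1) * a‖ := norm_mul_le _ _
    _ ≤ 1 * ‖(p - 1) * a‖ := by gcongr
    _ = ‖(p - 1) * a‖ := one_mul _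

/-- An intermediate claim from the proof of Lemma 3.4: if `(z_n)` is a bounded sequence of
invertible elements of the unitization `Ã` of a C*-algebra `A` with
`lim_n ‖(z_n* z_n − 1)·a‖ = 0` for every `a ∈ A`, then the unitaries
`u_n = z_n (z_n* z_n)^{-1/2}` of the polar decomposition satisfy
`lim_n ‖(z_n − u_n)·a‖ = 0` for every `a ∈ A`. -/
theorem polar_unitary_approximation
    {A : Type*} [NonUnitalCStarAlgebra A]
    (z : ℕ → Unitization ℂ A)
    (hz_bdd : ∃ C : ℝ, ∀ n, ‖z n‖ ≤ C)
    (hz_inv : ∀ n, IsUnit (z n))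
    (hz : ∀ a : A, Tendsto
      (fun n => ‖(star (z n) * z n - 1) * (a : Unitization ℂ A)‖) atTop (𝓝 0))
    (u : ℕ → Unitization ℂ A)
    (hu : ∀ n, u n = z n * CFC.rpow (star (z n) * z n) (-(1 / 2 : ℝ))) :
    (∀ n, u n ∈ unitary (Unitization ℂ A)) ∧
    (∀ a : A, Tendsto
      (fun n => ‖(z n - u n) * (a : Unitization ℂ A)‖) atTop (𝓝 0)) := by
  constructor
  · intro n
    rw [hu n]
    exact (polar_helper (z n) (hz_inv n)).1
  · intro a
    refine squeeze_zero (fun n => norm_nonneg _) (fun n => ?_) (hz a)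
    rw [hu n]
    exact (polar_helper (z n) (hz_inv n)).2 (a : Unitization ℂ A)
end
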